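/- Let μ = (μ₀, μ₁, μ₂) be an isomorphism of gl(𝕍) and let ℱ = (ℱ₀, ℱ₁) be a linear functor from 𝕍 to gl(𝕍) (linear maps ℱ₀ : V₀ → End⁰ and ℱ₁ : V₀ ⊕ V₁ → End⁰ ⊕ End¹ with s∘ℱ₁ = ℱ₀∘s and t∘ℱ₁ = ℱ₀∘t). Then the graph G_ℱ := {(ℱ₁(ξ), ξ) : ξ ∈ V₀ ⊕ V₁} ⊆ E is a Dirac structure of the μ-twisted omni-Lie 2-algebra gl(𝕍) ⊕_μ 𝕍 (i.e. G_ℱ = G_ℱ^⊥ with respect to ⟨·,·⟩_μ and ⟦G_ℱ, G_ℱ⟧_μ ⊆ G_ℱ) if and only if the bracket [ξ,η]_{μ,ℱ} := μ₁(ℱ₁(ξ))·η is skew-symmetric (μ₁(ℱ₁(ξ))·η = −μ₁(ℱ₁(η))·ξ for all ξ, η ∈ V₀ ⊕ V₁) and [ℱ₁(ξ), ℱ₁(η)] = ℱ₁([ξ,η]_{μ,ℱ}) for all ξ, η ∈ V₀ ⊕ V₁. -/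

import Mathlib

/-!
The graph `G_ℱ` pairs with itself through `μ₁(ℱ₁ ξ)·η + μ₁(ℱ₁ η)·ξ`, so it is isotropic exactly when
`[·,·]_{μ,ℱ}` is skew. Conversely, an element `(X, ξ)` of `G_ℱ^⊥` satisfies `μ₁ X · η = μ₁(ℱ₁ ξ) · η`
for every `η`; since the action of `gl(𝕍)` on `𝕍` is faithful and `μ₁` is injective, `X = ℱ₁ ξ`.
Once the bracket is skew, the Courant bracket of `(ℱ₁ ξ, ξ)` and `(ℱ₁ η, η)` is
`([ℱ₁ ξ, ℱ₁ η], [ξ,η]_{μ,ℱ})`, which lies on the graph iff `[ℱ₁ ξ, ℱ₁ η] = ℱ₁ [ξ,η]_{μ,ℱ}`.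
-/

open LinearMap

noncomputable section

namespace Omni

variable {V₀ V₁ : Type*}
  [AddCommGroup V₀] [Module ℝ V₀] [AddCommGroup V₁] [Module ℝ V₁]

variable (d : V₁ →ₗ[ℝ] V₀)

/-- `End⁰`: pairs `(A₀, A₁)` of endomorphisms with `A₀ ∘ d = d ∘ A₁`. -/
def End0 : Submodule ℝ ((V₀ →ₗ[ℝ] V₀) × (V₁ →ₗ[ℝ] V₁)) where
  carrier := {A | A.1 ∘ₗ d = d ∘ₗ A.2}
  add_mem' := by
    intro a b ha hb
    simp only [Set.mem_setOf_eq] at *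
    simp [add_comp, comp_add, ha, hb]
  zero_mem' := by
    simp only [Set.mem_setOf_eq]
    simp
  smul_mem' := by
    intro c a ha
    simp only [Set.mem_setOf_eq] at *
    simp [smul_comp, comp_smul, ha]

lemma mem_End0 {A : (V₀ →ₗ[ℝ] V₀) × (V₁ →ₗ[ℝ] V₁)} :
    A ∈ End0 d ↔ A.1 ∘ₗ d = d ∘ₗ A.2 := Iff.rfl

/-- Morphism space of `gl(𝕍)`:  `End⁰ ⊕ End¹`. -/
abbrev Gl := ↥(End0 d) × (V₀ →ₗ[ℝ] V₁)

/-- Morphism space of the omni-Lie 2-algebra `gl(𝕍) ⊕ 𝕍`. -/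
abbrev E := Gl d × (V₀ × V₁)

/-- `δ : End¹ → End⁰`, `δφ = (d∘φ, φ∘d)`. -/
def δm (φ : V₀ →ₗ[ℝ] V₁) : End0 d :=
  ⟨(d ∘ₗ φ, φ ∘ₗ d), by
    rw [mem_End0]
    exact (comp_assoc _ _ _).symm⟩

/-- commutator bracket on `End⁰`. -/
def bkt0 (A B : End0 d) : End0 d :=
  ⟨(A.1.1 ∘ₗ B.1.1 - B.1.1 ∘ₗ A.1.1, A.1.2 ∘ₗ B.1.2 - B.1.2 ∘ₗ A.1.2), by
    have hA : A.1.1 ∘ₗ d = d ∘ₗ A.1.2 := A.2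
    have hB : B.1.1 ∘ₗ d = d ∘ₗ B.1.2 := B.2
    rw [mem_End0]
    have ha : ∀ x, A.1.1 (d x) = d (A.1.2 x) := fun x => LinearMap.congr_fun hA x
    have hb : ∀ x, B.1.1 (d x) = d (B.1.2 x) := fun x => LinearMap.congr_fun hB x
    ext m
    simp [ha, hb]⟩

/-- `[A,φ] = A₁ ∘ φ - φ ∘ A₀` for `A ∈ End⁰`, `φ ∈ End¹`. -/
def bktAφ (A : End0 d) (φ : V₀ →ₗ[ℝ] V₁) : V₀ →ₗ[ℝ] V₁ :=
  A.1.2 ∘ₗ φ - φ ∘ₗ A.1.1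

/-- `[φ,ψ]_δ = φ∘d∘ψ - ψ∘d∘φ`. -/
def bktδ (φ ψ : V₀ →ₗ[ℝ] V₁) : V₀ →ₗ[ℝ] V₁ :=
  φ ∘ₗ d ∘ₗ ψ - ψ ∘ₗ d ∘ₗ φ

/-- bracket on the morphism space `End⁰ ⊕ End¹` of `gl(𝕍)`. -/
def bkt (X Y : Gl d) : Gl d :=
  (bkt0 d X.1 Y.1, bktAφ d X.1 Y.2 - bktAφ d Y.1 X.2 + bktδ d X.2 Y.2)

/-- action of `gl(𝕍)` on `𝕍`:  `(A,φ)·(u,m) = (A₀u, A₁m + φ(u+dm))`. -/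
def act (X : Gl d) (ξ : V₀ × V₁) : V₀ × V₁ :=
  (X.1.1.1 ξ.1, X.1.1.2 ξ.2 + X.2 (ξ.1 + d ξ.2))

/-- the `𝕍`-valued pairing on `E`. -/
def pairE (e₁ e₂ : E d) : V₀ × V₁ :=
  (2⁻¹ : ℝ) • (act d e₁.1 e₂.2 + act d e₂.1 e₁.2)

/-- pairing at the level of objects. -/
def pairObj (x y : (End0 d) × V₀) : V₀ :=
  (2⁻¹ : ℝ) • (x.1.1.1 y.2 + y.1.1.1 x.2)

/-- the Courant bracket on `E`. -/
def courant (e₁ e₂ : E d) : E d :=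
  (bkt d e₁.1 e₂.1, (2⁻¹ : ℝ) • (act d e₁.1 e₂.2 - act d e₂.1 e₁.2))

/-- Courant bracket at the level of objects. -/
def courantObj (x y : (End0 d) × V₀) : (End0 d) × V₀ :=
  (bkt0 d x.1 y.1, (2⁻¹ : ℝ) • (x.1.1.1 y.2 - y.1.1.1 x.2))

/-- the Dorfman bracket on `E`. -/
def dorfman (e₁ e₂ : E d) : E d :=
  (bkt d e₁.1 e₂.1, act d e₁.1 e₂.2)

/-- source of a morphism of `gl(𝕍) ⊕ 𝕍`. -/
def sE (e : E d) : (End0 d) × V₀ := (e.1.1, e.2.1)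

/-- target of a morphism of `gl(𝕍) ⊕ 𝕍`. -/
def tE (e : E d) : (End0 d) × V₀ := (e.1.1 + δm d e.1.2, e.2.1 + d e.2.2)

/-- vertical composition of morphisms of `gl(𝕍) ⊕ 𝕍`. -/
def compE (e e' : E d) : E d := ((e.1.1, e.1.2 + e'.1.2), (e.2.1, e.2.2 + e'.2.2))

/-- vertical composition of morphisms of `𝕍`. -/
def compV (x y : V₀ × V₁) : V₀ × V₁ := (x.1, x.2 + y.2)

/-- orthogonal complement w.r.t. the `𝕍`-valued pairing. -/
def perp (L : Set (E d)) : Set (E d) := {e | ∀ l ∈ L, pairE d e l = 0}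

/-- bilinear functor data `(F₀, F_a, F_b)` for `𝕍`. -/
structure BilinData where
  F0 : V₀ →ₗ[ℝ] V₀ →ₗ[ℝ] V₀
  Fa : V₀ →ₗ[ℝ] V₁ →ₗ[ℝ] V₁
  Fb : V₁ →ₗ[ℝ] V₀ →ₗ[ℝ] V₁
  ha : ∀ u n, d (Fa u n) = F0 u (d n)
  hb : ∀ m v, d (Fb m v) = F0 (d m) v
  hc : ∀ m n, Fa (d m) n = Fb m (d n)

/-- `ad_F (u,m) = ((F₀(u,·), F_a(u,·)), F_b(m,·))`. -/
def adF (F : BilinData d) (ξ : V₀ × V₁) : Gl d :=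
  (⟨(F.F0 ξ.1, F.Fa ξ.1), by
      rw [mem_End0]
      ext n
      exact (F.ha ξ.1 n).symm⟩, F.Fb ξ.2)

/-- the graph `G_F = {(ad_F ξ, ξ)}`. -/
def graphF (F : BilinData d) : Set (E d) := {e | ∃ ξ : V₀ × V₁, e = (adF d F ξ, ξ)}

/-- an isomorphism `μ = (μ₀, μ₁, μ₂)` from the Lie 2-algebra `gl(𝕍)` to itself. -/
structure GlIso where
  μ0 : (End0 d) ≃ₗ[ℝ] (End0 d)
  μ1 : (Gl d) ≃ₗ[ℝ] (Gl d)
  hs : ∀ X : Gl d, (μ1 X).1 = μ0 X.1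
  ht : ∀ X : Gl d, (μ1 X).1 + δm d (μ1 X).2 = μ0 (X.1 + δm d X.2)
  hid : ∀ A : End0 d, μ1 (A, 0) = (μ0 A, 0)
  hcomp : ∀ (A : End0 d) (φ φ' : V₀ →ₗ[ℝ] V₁),
    μ1 (A, φ + φ') = ((μ1 (A, φ)).1, (μ1 (A, φ)).2 + (μ1 (A + δm d φ, φ')).2)
  μ2 : (End0 d) →ₗ[ℝ] (End0 d) →ₗ[ℝ] Gl d
  hskew : ∀ A B, μ2 A B = - μ2 B A
  hs2 : ∀ A B, (μ2 A B).1 = μ0 (bkt0 d A B)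
  ht2 : ∀ A B, (μ2 A B).1 + δm d (μ2 A B).2 = bkt0 d (μ0 A) (μ0 B)
  hnat : ∀ (A B : End0 d) (φ ψ : V₀ →ₗ[ℝ] V₁),
    (μ2 A B).2 + (bkt d (μ1 (A, φ)) (μ1 (B, ψ))).2
      = (μ1 (bkt d (A, φ) (B, ψ))).2 + (μ2 (A + δm d φ) (B + δm d ψ)).2
  hcoh : ∀ A B C : End0 d,
    (μ2 (bkt0 d A B) C).2 + (bkt d (μ2 A B) ((μ0 C, 0) : Gl d)).2
      = (μ2 A (bkt0 d B C)).2 + (μ2 B (bkt0 d C A)).2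
        + (bkt d ((μ0 A, 0) : Gl d) (μ2 B C)).2
        + (bkt d ((μ0 B, 0) : Gl d) (μ2 C A)).2

/-- the `μ`-twisted pairing on `E`. -/
def pairμ (μ : GlIso d) (e₁ e₂ : E d) : V₀ × V₁ :=
  (2⁻¹ : ℝ) • (act d (μ.μ1 e₁.1) e₂.2 + act d (μ.μ1 e₂.1) e₁.2)

/-- the `μ`-twisted Courant bracket on `E`. -/
def courantμ (μ : GlIso d) (e₁ e₂ : E d) : E d :=
  (bkt d e₁.1 e₂.1, (2⁻¹ : ℝ) • (act d (μ.μ1 e₁.1) e₂.2 - act d (μ.μ1 e₂.1) e₁.2))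

/-- orthogonal complement w.r.t. the `μ`-twisted pairing. -/
def perpμ (μ : GlIso d) (L : Set (E d)) : Set (E d) := {e | ∀ l ∈ L, pairμ d μ e l = 0}

/-- the `μ`-twisted Dorfman bracket at the level of objects. -/
def dorfObjμ (μ : GlIso d) (x y : (End0 d) × V₀) : (End0 d) × V₀ :=
  (bkt0 d x.1 y.1, (μ.μ0 x.1).1.1 y.2)

end Omni

end

lemma inv_two_smul_add_self {M : Type*} [AddCommGroup M] [Module ℝ M] (a : M) :
    (2⁻¹ : ℝ) • (a + a) = a := by
  rw [← two_smul ℝ a, smul_smul, inv_mul_cancel₀ two_ne_zero, one_smul]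

namespace Omni

variable {V₀ V₁ : Type*} [AddCommGroup V₀] [Module ℝ V₀] [AddCommGroup V₁] [Module ℝ V₁]
  (d : V₁ →ₗ[ℝ] V₀)

def graph (F : V₀ × V₁ → Gl d) : Set (E d) := {e | ∃ ξ : V₀ × V₁, e = (F ξ, ξ)}

variable {d} in
lemma mem_graph_iff {F : V₀ × V₁ → Gl d} {e : E d} : e ∈ graph d F ↔ e.1 = F e.2 := by
  constructor
  · rintro ⟨ξ, rfl⟩
    rfl
  · intro h
    exact ⟨e.2, Prod.ext h rfl⟩

/-- Testing on `(u, 0)` recovers `A₀` and `φ`, and then testing on `(0, m)` recovers `A₁`. -/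
lemma act_injective : Function.Injective (act d) := by
  intro X Y h
  have h₀ : ∀ u, X.1.1.1 u = Y.1.1.1 u := fun u => congrArg Prod.fst (congrFun h (u, 0))
  have hφ : ∀ u, X.2 u = Y.2 u := fun u => by
    simpa [act] using congrArg Prod.snd (congrFun h (u, 0))
  have h₁ : ∀ m, X.1.1.2 m = Y.1.1.2 m := fun m => by
    have hm := congrArg Prod.snd (congrFun h (0, m))
    simp only [act, zero_add, hφ (d m)] at hm
    exact add_right_cancel hm
  exact Prod.ext (Subtype.ext (Prod.ext (LinearMap.ext h₀) (LinearMap.ext h₁))) (LinearMap.ext hφ)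

variable (μ : GlIso d)

lemma pairμ_eq_zero_iff (e₁ e₂ : E d) :
    pairμ d μ e₁ e₂ = 0 ↔ act d (μ.μ1 e₁.1) e₂.2 = -act d (μ.μ1 e₂.1) e₁.2 := by
  rw [pairμ, smul_eq_zero, eq_neg_iff_add_eq_zero]
  norm_num

lemma courantμ_eq_of_act_eq_neg {X Y : Gl d} {ξ η : V₀ × V₁}
    (h : act d (μ.μ1 X) η = -act d (μ.μ1 Y) ξ) :
    courantμ d μ (X, ξ) (Y, η) = (bkt d X Y, act d (μ.μ1 X) η) := by
  rw [courantμ, ← neg_neg (act d (μ.μ1 Y) ξ), ← h, sub_neg_eq_add, inv_two_smul_add_self]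

variable (F : V₀ × V₁ → Gl d)

lemma graph_eq_perpμ_iff :
    graph d F = perpμ d μ (graph d F) ↔
      ∀ ξ η : V₀ × V₁, act d (μ.μ1 (F ξ)) η = -act d (μ.μ1 (F η)) ξ := by
  constructor
  · intro hG ξ η
    have hξ : ((F ξ, ξ) : E d) ∈ perpμ d μ (graph d F) := hG ▸ ⟨ξ, rfl⟩
    exact (pairμ_eq_zero_iff d μ _ _).1 (hξ _ ⟨η, rfl⟩)
  · intro hskew
    ext e
    refine ⟨?_, fun he => mem_graph_iff.2 ?_⟩
    · rintro ⟨ξ, rfl⟩ _ ⟨η, rfl⟩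
      exact (pairμ_eq_zero_iff d μ _ _).2 (hskew ξ η)
    · have hact : ∀ η, act d (μ.μ1 e.1) η = act d (μ.μ1 (F e.2)) η := fun η => by
        rw [(pairμ_eq_zero_iff d μ _ _).1 (he _ ⟨η, rfl⟩), hskew η e.2, neg_neg]
      exact μ.μ1.injective (act_injective d (funext hact))

lemma courantμ_mem_graph_iff
    (hskew : ∀ ξ η : V₀ × V₁, act d (μ.μ1 (F ξ)) η = -act d (μ.μ1 (F η)) ξ) :
    (∀ e ∈ graph d F, ∀ e' ∈ graph d F, courantμ d μ e e' ∈ graph d F) ↔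
      ∀ ξ η : V₀ × V₁, bkt d (F ξ) (F η) = F (act d (μ.μ1 (F ξ)) η) := by
  constructor
  · intro hclosed ξ η
    have h := hclosed _ ⟨ξ, rfl⟩ _ ⟨η, rfl⟩
    rwa [courantμ_eq_of_act_eq_neg d μ (hskew ξ η), mem_graph_iff] at h
  · rintro hbkt _ ⟨ξ, rfl⟩ _ ⟨η, rfl⟩
    rw [courantμ_eq_of_act_eq_neg d μ (hskew ξ η), mem_graph_iff]
    exact hbkt ξ η

end Omni

open Omni in
theorem twisted_graph_dirac_iff_general {V₀ V₁ : Type*} [AddCommGroup V₀] [Module ℝ V₀] [AddCommGroup V₁] [Module ℝ V₁]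
    (d : V₁ →ₗ[ℝ] V₀) (μ : GlIso d)
    (F1 : (V₀ × V₁) →ₗ[ℝ] Gl d)
    (G : Set (E d)) (hG : G = {e : E d | ∃ ξ : V₀ × V₁, e = (F1 ξ, ξ)}) :
    (G = perpμ d μ G ∧ ∀ e ∈ G, ∀ e' ∈ G, courantμ d μ e e' ∈ G)
      ↔ ((∀ ξ η : V₀ × V₁,
            act d (μ.μ1 (F1 ξ)) η = - act d (μ.μ1 (F1 η)) ξ) ∧
         (∀ ξ η : V₀ × V₁,
            bkt d (F1 ξ) (F1 η) = F1 (act d (μ.μ1 (F1 ξ)) η))) := by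
  obtain rfl : G = graph d F1 := hG
  rw [graph_eq_perpμ_iff]
  exact and_congr_right (courantμ_mem_graph_iff d μ F1)

open Omni in
/-- The graph of a linear functor `ℱ : 𝕍 → gl(𝕍)` is a Dirac structure of the
`μ`-twisted omni-Lie 2-algebra `gl(𝕍) ⊕_μ 𝕍` iff the bracket
`[ξ,η]_{μ,ℱ} = μ₁(ℱ₁(ξ))·η` is skew-symmetric and
`[ℱ₁(ξ), ℱ₁(η)] = ℱ₁([ξ,η]_{μ,ℱ})`. -/
theorem twisted_graph_dirac_iff {V₀ V₁ : Type*} [AddCommGroup V₀] [Module ℝ V₀] [AddCommGroup V₁] [Module ℝ V₁]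
    [FiniteDimensional ℝ V₀] [FiniteDimensional ℝ V₁]
    (d : V₁ →ₗ[ℝ] V₀) (μ : GlIso d)
    (F0 : V₀ →ₗ[ℝ] End0 d) (F1 : (V₀ × V₁) →ₗ[ℝ] Gl d)
    (hs : ∀ ξ : V₀ × V₁, (F1 ξ).1 = F0 ξ.1)
    (ht : ∀ ξ : V₀ × V₁, (F1 ξ).1 + δm d (F1 ξ).2 = F0 (ξ.1 + d ξ.2))
    (G : Set (E d)) (hG : G = {e : E d | ∃ ξ : V₀ × V₁, e = (F1 ξ, ξ)}) :
    (G = perpμ d μ G ∧ ∀ e ∈ G, ∀ e' ∈ G, courantμ d μ e e' ∈ G)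
      ↔ ((∀ ξ η : V₀ × V₁,
            act d (μ.μ1 (F1 ξ)) η = - act d (μ.μ1 (F1 η)) ξ) ∧
         (∀ ξ η : V₀ × V₁,
            bkt d (F1 ξ) (F1 η) = F1 (act d (μ.μ1 (F1 ξ)) η))) :=
  twisted_graph_dirac_iff_general d μ F1 G hG
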